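/- arXiv:1910.07186 — 8 statements merged into one kernel-verified Lean document; each statement's English description precedes it below -/
import Mathlib

section
/- If V : S → ℝ satisfies the Bellman equation V(s) = r^π(s) + γ (P^π V)(s) for all s, and d : S → ℝ satisfies the flow equation d(s) = (1−γ) μ₀(s) + γ (T^π d)(s) for all s, then (1−γ) ∑_{s} μ₀(s) V(s) = ∑_{s} r^π(s) d(s); that is, the value-function expression and the density expression for the expected discounted reward R^π agree. -/
open Finset

variable {S A : Type*} [Fintype S] [Fintype A]

/-- `(P^π f)(s) = ∑_{s',a} T(s'|s,a) π(a|s) f(s')`. -/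
noncomputable def Ppi (T : S → A → S → ℝ) (pol : S → A → ℝ) (f : S → ℝ) (s : S) : ℝ :=
  ∑ s' : S, ∑ a : A, T s a s' * pol s a * f s'

/-- `(T^π g)(s') = ∑_{s,a} T(s'|s,a) π(a|s) g(s)`. -/
noncomputable def Tpi (T : S → A → S → ℝ) (pol : S → A → ℝ) (g : S → ℝ) (s' : S) : ℝ :=
  ∑ s : S, ∑ a : A, T s a s' * pol s a * g s

/-- `r^π(s) = ∑_a π(a|s) r(s,a)`. -/
noncomputable def rpi (pol : S → A → ℝ) (r : S → A → ℝ) (s : S) : ℝ :=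
  ∑ a : A, pol s a * r s a

/-- the value-function and density expressions for the expected
discounted reward agree. -/
theorem value_density_expressions_agree
    (T : S → A → S → ℝ) (pol : S → A → ℝ) (r : S → A → ℝ)
    (γ : ℝ) (hγ0 : 0 < γ) (hγ1 : γ < 1)
    (μ0 : S → ℝ) (hμ0 : ∀ s, 0 ≤ μ0 s) (hμ1 : ∑ s : S, μ0 s = 1)
    (hT0 : ∀ s a s', 0 ≤ T s a s') (hT1 : ∀ s a, ∑ s' : S, T s a s' = 1)
    (hpol0 : ∀ s a, 0 ≤ pol s a) (hpol1 : ∀ s, ∑ a : A, pol s a = 1)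
    (V : S → ℝ) (hV : ∀ s, V s = rpi pol r s + γ * Ppi T pol V s)
    (d : S → ℝ) (hd : ∀ s, d s = (1 - γ) * μ0 s + γ * Tpi T pol d s) :
    (1 - γ) * ∑ s : S, μ0 s * V s = ∑ s : S, rpi pol r s * d s := by
  have key : ∑ s : S, d s * Ppi T pol V s = ∑ s' : S, Tpi T pol d s' * V s' := by
    unfold Ppi Tpi
    simp only [Finset.sum_mul, Finset.mul_sum]
    rw [Finset.sum_comm]
    congr 1; ext s'; congr 1; ext s; congr 1; ext a; ring
  have h1 : ∑ s : S, d s * V s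
      = ∑ s : S, d s * rpi pol r s + γ * ∑ s : S, d s * Ppi T pol V s := by
    rw [Finset.mul_sum, ← Finset.sum_add_distrib]
    congr 1; ext s; rw [hV s]; ring
  have h2 : ∑ s : S, d s * V s
      = (1 - γ) * ∑ s : S, μ0 s * V s + γ * ∑ s' : S, Tpi T pol d s' * V s' := by
    rw [Finset.mul_sum, Finset.mul_sum, ← Finset.sum_add_distrib]
    congr 1; ext s; rw [hd s]; ring
  have := h1.symm.trans h2
  rw [← key] at this
  have h3 : (1 - γ) * ∑ s : S, μ0 s * V s = ∑ s : S, d s * rpi pol r s := by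
    linarith
  rw [h3]
  congr 1; ext s; ring
end

section
/- (Double robustness, Theorem 1.) Define the population estimators R_VAL^∞[V̂] = (1−γ) ∑_s μ₀(s) V̂(s), R_SIS^∞[ŵ] = ∑_s d_{π₀}(s) ŵ(s) r^π(s), the bridge estimator R_bridge^∞[V̂, ŵ] = ∑_s d_{π₀}(s) ŵ(s) (V̂(s) − γ (P^π V̂)(s)), and the doubly robust estimator R_DR^∞[V̂, ŵ] = R_SIS^∞[ŵ] + R_VAL^∞[V̂] − R_bridge^∞[V̂, ŵ]. Then for any V̂, ŵ : S → ℝ, R_DR^∞[V̂, ŵ] − R^π = ∑_s d_{π₀}(s) · ε_ŵ(s) · ε_V̂(s), where ε_ŵ(s) = d_π(s)/d_{π₀}(s) − ŵ(s) and ε_V̂(s) = V̂(s) − r^π(s) − γ (P^π V̂)(s). In particular, R_DR^∞[V̂, ŵ] = R^π whenever either ŵ(s) = d_π(s)/d_{π₀}(s) for all s or V̂ satisfies the Bellman equation V̂ = r^π + γ P^π V̂. -/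
open Finset

variable {S A : Type*} [Fintype S] [Fintype A]

/-- `R_VAL^∞[V̂] = (1-γ) ∑_s μ₀(s) V̂(s)`. -/
noncomputable def Rval (γ : ℝ) (μ0 V : S → ℝ) : ℝ :=
  (1 - γ) * ∑ s : S, μ0 s * V s

/-- `R_SIS^∞[ŵ] = ∑_s d_{π₀}(s) ŵ(s) r^π(s)`. -/
noncomputable def Rsis (pol : S → A → ℝ) (r : S → A → ℝ) (dpi0 w : S → ℝ) : ℝ :=
  ∑ s : S, dpi0 s * w s * rpi pol r s

/-- `R_bridge^∞[V̂, ŵ] = ∑_s d_{π₀}(s) ŵ(s) (V̂(s) - γ (P^π V̂)(s))`. -/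
noncomputable def Rbridge (T : S → A → S → ℝ) (pol : S → A → ℝ) (γ : ℝ)
    (dpi0 V w : S → ℝ) : ℝ :=
  ∑ s : S, dpi0 s * w s * (V s - γ * Ppi T pol V s)

/-- `R_DR^∞[V̂, ŵ] = R_SIS^∞[ŵ] + R_VAL^∞[V̂] - R_bridge^∞[V̂, ŵ]`. -/
noncomputable def Rdr (T : S → A → S → ℝ) (pol : S → A → ℝ) (r : S → A → ℝ) (γ : ℝ)
    (μ0 dpi0 V w : S → ℝ) : ℝ :=
  Rsis pol r dpi0 w + Rval γ μ0 V - Rbridge T pol γ dpi0 V w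

/-- Theorem 1, double robustness. -/
theorem doubly_robust_bias
    (T : S → A → S → ℝ) (pol : S → A → ℝ) (r : S → A → ℝ)
    (γ : ℝ) (hγ0 : 0 < γ) (hγ1 : γ < 1)
    (μ0 : S → ℝ) (hμ0 : ∀ s, 0 ≤ μ0 s) (hμ1 : ∑ s : S, μ0 s = 1)
    (hT0 : ∀ s a s', 0 ≤ T s a s') (hT1 : ∀ s a, ∑ s' : S, T s a s' = 1)
    (hpol0 : ∀ s a, 0 ≤ pol s a) (hpol1 : ∀ s, ∑ a : A, pol s a = 1)
    (dpi : S → ℝ) (hdpi : ∀ s, dpi s = (1 - γ) * μ0 s + γ * Tpi T pol dpi s)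
    (Rpi : ℝ) (hRpi : Rpi = ∑ s : S, rpi pol r s * dpi s)
    (dpi0 : S → ℝ) (hdpi0 : ∀ s, 0 < dpi0 s)
    (V w : S → ℝ) :
    Rdr T pol r γ μ0 dpi0 V w - Rpi
      = ∑ s : S, dpi0 s * (dpi s / dpi0 s - w s)
          * (V s - rpi pol r s - γ * Ppi T pol V s)
    ∧ ((∀ s, w s = dpi s / dpi0 s) → Rdr T pol r γ μ0 dpi0 V w = Rpi)
    ∧ ((∀ s, V s = rpi pol r s + γ * Ppi T pol V s) →
        Rdr T pol r γ μ0 dpi0 V w = Rpi) := by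

  have hswap : ∑ s : S, dpi s * Ppi T pol V s = ∑ s' : S, Tpi T pol dpi s' * V s' := by
    simp only [Ppi, Tpi, Finset.mul_sum, Finset.sum_mul]
    rw [Finset.sum_comm]
    exact Finset.sum_congr rfl fun s' _ => Finset.sum_congr rfl fun s _ =>
      Finset.sum_congr rfl fun a _ => by ring
  have hflow : ∑ s : S, dpi s * V s
      = (1 - γ) * ∑ s : S, μ0 s * V s + γ * ∑ s : S, dpi s * Ppi T pol V s := by
    rw [hswap]
    calc ∑ s : S, dpi s * V s
        = ∑ s : S, ((1 - γ) * μ0 s + γ * Tpi T pol dpi s) * V s := by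
          exact Finset.sum_congr rfl fun s _ => by rw [← hdpi s]
      _ = (1 - γ) * ∑ s : S, μ0 s * V s + γ * ∑ s' : S, Tpi T pol dpi s' * V s' := by
          rw [Finset.mul_sum, Finset.mul_sum, ← Finset.sum_add_distrib]
          exact Finset.sum_congr rfl fun s _ => by ring
  have hmain : Rdr T pol r γ μ0 dpi0 V w - Rpi
      = ∑ s : S, dpi0 s * (dpi s / dpi0 s - w s)
          * (V s - rpi pol r s - γ * Ppi T pol V s) := by
    have hR : ∑ s : S, dpi0 s * (dpi s / dpi0 s - w s)
          * (V s - rpi pol r s - γ * Ppi T pol V s)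
        = (∑ s : S, dpi s * V s) - (∑ s : S, rpi pol r s * dpi s)
          - γ * (∑ s : S, dpi s * Ppi T pol V s)
          - (∑ s : S, dpi0 s * w s * (V s - γ * Ppi T pol V s))
          + (∑ s : S, dpi0 s * w s * rpi pol r s) := by
      simp only [Finset.mul_sum, ← Finset.sum_sub_distrib, ← Finset.sum_add_distrib]
      refine Finset.sum_congr rfl fun s _ => ?_
      have h0 : dpi0 s ≠ 0 := (hdpi0 s).ne'
      field_simp
      ring
    rw [hR, hRpi]
    simp only [Rdr, Rsis, Rval, Rbridge]
    linarith [hflow]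
  refine ⟨hmain, fun hw => ?_, fun hV => ?_⟩
  · have : Rdr T pol r γ μ0 dpi0 V w - Rpi = 0 := by
      rw [hmain]
      exact Finset.sum_eq_zero fun s _ => by rw [hw s]; ring
    linarith
  · have : Rdr T pol r γ μ0 dpi0 V w - Rpi = 0 := by
      rw [hmain]
      exact Finset.sum_eq_zero fun s _ => by rw [hV s]; ring
    linarith
end

section
/- (Bias of the value-function estimator.) For any V̂ : S → ℝ, the population estimator R_VAL^∞[V̂] = (1−γ) ∑_s μ₀(s) V̂(s) satisfies R_VAL^∞[V̂] − R^π = ∑_s d_{π₀}(s) · (d_π(s)/d_{π₀}(s)) · ε_V̂(s) = ∑_s d_π(s) ε_V̂(s), where ε_V̂(s) = V̂(s) − r^π(s) − γ (P^π V̂)(s) is the Bellman residual. -/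
open Finset

variable {S A : Type*} [Fintype S] [Fintype A]

/-- bias of the value-function estimator
`R_VAL^∞[V̂] = (1-γ) ∑_s μ₀(s) V̂(s)`. -/
theorem val_bias
    (T : S → A → S → ℝ) (pol : S → A → ℝ) (r : S → A → ℝ)
    (γ : ℝ) (hγ0 : 0 < γ) (hγ1 : γ < 1)
    (μ0 : S → ℝ) (hμ0 : ∀ s, 0 ≤ μ0 s) (hμ1 : ∑ s : S, μ0 s = 1)
    (hT0 : ∀ s a s', 0 ≤ T s a s') (hT1 : ∀ s a, ∑ s' : S, T s a s' = 1)
    (hpol0 : ∀ s a, 0 ≤ pol s a) (hpol1 : ∀ s, ∑ a : A, pol s a = 1)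
    (dpi : S → ℝ) (hdpi : ∀ s, dpi s = (1 - γ) * μ0 s + γ * Tpi T pol dpi s)
    (Rpi : ℝ) (hRpi : Rpi = ∑ s : S, rpi pol r s * dpi s)
    (dpi0 : S → ℝ) (hdpi0 : ∀ s, 0 < dpi0 s)
    (V : S → ℝ) :
    ((1 - γ) * ∑ s : S, μ0 s * V s) - Rpi
        = ∑ s : S, dpi0 s * (dpi s / dpi0 s)
            * (V s - rpi pol r s - γ * Ppi T pol V s)
    ∧ ((1 - γ) * ∑ s : S, μ0 s * V s) - Rpi
        = ∑ s : S, dpi s * (V s - rpi pol r s - γ * Ppi T pol V s) := by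
  
  have key : ∑ s : S, dpi s * Ppi T pol V s = ∑ s' : S, Tpi T pol dpi s' * V s' := by
    simp only [Ppi, Tpi, Finset.mul_sum, Finset.sum_mul]
    rw [Finset.sum_comm]
    exact Finset.sum_congr rfl fun s' _ => Finset.sum_congr rfl fun s _ =>
      Finset.sum_congr rfl fun a _ => by ring
  have main : ((1 - γ) * ∑ s : S, μ0 s * V s) - Rpi
      = ∑ s : S, dpi s * (V s - rpi pol r s - γ * Ppi T pol V s) := by
    have expand : ∑ s : S, dpi s * (V s - rpi pol r s - γ * Ppi T pol V s)
        = (∑ s : S, dpi s * V s) - (∑ s : S, rpi pol r s * dpi s)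
          - γ * ∑ s : S, dpi s * Ppi T pol V s := by
      rw [Finset.mul_sum, ← Finset.sum_sub_distrib, ← Finset.sum_sub_distrib]
      exact Finset.sum_congr rfl fun s _ => by ring
    rw [expand, key, hRpi]
    have h1 : ∑ s : S, dpi s * V s - γ * ∑ s' : S, Tpi T pol dpi s' * V s'
        = ∑ s : S, (dpi s - γ * Tpi T pol dpi s) * V s := by
      rw [Finset.mul_sum, ← Finset.sum_sub_distrib]
      exact Finset.sum_congr rfl fun s _ => by ring
    have h2 : ∀ s, dpi s - γ * Tpi T pol dpi s = (1 - γ) * μ0 s := fun s => by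
      rw [hdpi s]; ring
    rw [sub_right_comm, h1]
    simp only [h2]
    rw [Finset.mul_sum]
    congr 1
    exact Finset.sum_congr rfl fun s _ => by ring
  refine ⟨?_, main⟩
  rw [main]
  exact Finset.sum_congr rfl fun s _ => by
    rw [mul_div_cancel₀ _ (ne_of_gt (hdpi0 s))]
end

section
/- (Theorem 3, Part I: double robustness of the Lagrangian.) Define the Lagrangian L(V, ρ) = (1−γ) ∑_s μ₀(s) V(s) − ∑_s ρ(s) (V(s) − r^π(s) − γ (P^π V)(s)) for V, ρ : S → ℝ. Then: (i) for every V : S → ℝ, L(V, d_π) = R^π, where d_π satisfies the flow equation d_π = (1−γ) μ₀ + γ T^π d_π and R^π = ∑_s r^π(s) d_π(s); and (ii) for every ρ : S → ℝ, L(V^π, ρ) = R^π, where V^π satisfies the Bellman equation V^π = r^π + γ P^π V^π. -/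
open Finset

variable {S A : Type*} [Fintype S] [Fintype A]

/-- The Lagrangian `L(V,ρ) = (1-γ) ∑_s μ₀(s) V(s) - ∑_s ρ(s)(V(s) - r^π(s) - γ (P^π V)(s))`. -/
noncomputable def Lagr (T : S → A → S → ℝ) (pol : S → A → ℝ) (r : S → A → ℝ)
    (γ : ℝ) (μ0 : S → ℝ) (V ρ : S → ℝ) : ℝ :=
  (1 - γ) * ∑ s : S, μ0 s * V s
    - ∑ s : S, ρ s * (V s - rpi pol r s - γ * Ppi T pol V s)


lemma adjoint_lemma {S A : Type*} [Fintype S] [Fintype A]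
    (T : S → A → S → ℝ) (pol : S → A → ℝ) (g f : S → ℝ) :
    ∑ s' : S, Tpi T pol g s' * f s' = ∑ s : S, g s * Ppi T pol f s := by
  unfold Tpi Ppi
  simp only [sum_mul, mul_sum]
  rw [Finset.sum_comm]
  exact Finset.sum_congr rfl fun s _ => Finset.sum_congr rfl fun s' _ =>
    Finset.sum_congr rfl fun a _ => by ring

/-- Theorem 3, Part I: double robustness of the Lagrangian. -/
theorem lagrangian_doubly_robust
    (T : S → A → S → ℝ) (pol : S → A → ℝ) (r : S → A → ℝ)
    (γ : ℝ) (hγ0 : 0 < γ) (hγ1 : γ < 1)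
    (μ0 : S → ℝ) (hμ0 : ∀ s, 0 ≤ μ0 s) (hμ1 : ∑ s : S, μ0 s = 1)
    (hT0 : ∀ s a s', 0 ≤ T s a s') (hT1 : ∀ s a, ∑ s' : S, T s a s' = 1)
    (hpol0 : ∀ s a, 0 ≤ pol s a) (hpol1 : ∀ s, ∑ a : A, pol s a = 1)
    (dpi : S → ℝ) (hdpi : ∀ s, dpi s = (1 - γ) * μ0 s + γ * Tpi T pol dpi s)
    (Rpi : ℝ) (hRpi : Rpi = ∑ s : S, rpi pol r s * dpi s)
    (Vpi : S → ℝ) (hVpi : ∀ s, Vpi s = rpi pol r s + γ * Ppi T pol Vpi s) :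
    (∀ V : S → ℝ, Lagr T pol r γ μ0 V dpi = Rpi)
    ∧ (∀ ρ : S → ℝ, Lagr T pol r γ μ0 Vpi ρ = Rpi) := by
  have key : ∀ V : S → ℝ, ∑ s : S, dpi s * V s
      = (1 - γ) * ∑ s : S, μ0 s * V s + γ * ∑ s : S, dpi s * Ppi T pol V s := by
    intro V
    have h1 : ∑ s : S, dpi s * V s
        = ∑ s : S, ((1 - γ) * μ0 s + γ * Tpi T pol dpi s) * V s := by
      refine Finset.sum_congr rfl fun s _ => by rw [← hdpi s]
    rw [h1]
    have h2 := adjoint_lemma T pol dpi V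
    simp only [add_mul, Finset.sum_add_distrib, mul_assoc, ← Finset.mul_sum]
    rw [h2]
  constructor
  · intro V
    unfold Lagr
    have hsplit : ∑ s : S, dpi s * (V s - rpi pol r s - γ * Ppi T pol V s)
        = ∑ s : S, dpi s * V s - ∑ s : S, rpi pol r s * dpi s
          - γ * ∑ s : S, dpi s * Ppi T pol V s := by
      simp only [Finset.mul_sum, ← Finset.sum_sub_distrib]
      refine Finset.sum_congr rfl fun s _ => by ring
    rw [hsplit, key V, hRpi]; ring
  · intro ρ
    unfold Lagr
    have hz : ∑ s : S, ρ s * (Vpi s - rpi pol r s - γ * Ppi T pol Vpi s) = 0 := by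
      refine Finset.sum_eq_zero fun s _ => ?_
      rw [hVpi s]; ring
    rw [hz, sub_zero, hRpi]
    have h := key Vpi
    have h2 : ∑ s : S, rpi pol r s * dpi s
        = ∑ s : S, dpi s * (Vpi s - γ * Ppi T pol Vpi s) := by
      refine Finset.sum_congr rfl fun s _ => ?_
      rw [hVpi s]; ring
    rw [h2]
    have h3 : ∑ s : S, dpi s * (Vpi s - γ * Ppi T pol Vpi s)
        = ∑ s : S, dpi s * Vpi s - γ * ∑ s : S, dpi s * Ppi T pol Vpi s := by
      simp only [Finset.mul_sum, ← Finset.sum_sub_distrib]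
      refine Finset.sum_congr rfl fun s _ => by ring
    rw [h3, h]; ring
end

section
/- (Primal linear program attains R^π, Theorem 3 Part II primal side.) Suppose V^π : S → ℝ satisfies the Bellman equation V^π = r^π + γ P^π V^π, and d_π : S → ℝ satisfies the flow equation d_π = (1−γ) μ₀ + γ T^π d_π with d_π(s) ≥ 0 for all s; let R^π = ∑_s r^π(s) d_π(s). Then R^π is the least element of the set { (1−γ) ∑_s μ₀(s) V(s) : V : S → ℝ, V(s) ≥ r^π(s) + γ (P^π V)(s) for all s }; in particular the minimum is attained at V = V^π. -/
open Finset

variable {S A : Type*} [Fintype S] [Fintype A]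

/-- the primal linear program attains `R^π`, with minimum at `V^π`. -/
theorem primal_LP_attains_Rpi
    (T : S → A → S → ℝ) (pol : S → A → ℝ) (r : S → A → ℝ)
    (γ : ℝ) (hγ0 : 0 < γ) (hγ1 : γ < 1)
    (μ0 : S → ℝ) (hμ0 : ∀ s, 0 ≤ μ0 s) (hμ1 : ∑ s : S, μ0 s = 1)
    (hT0 : ∀ s a s', 0 ≤ T s a s') (hT1 : ∀ s a, ∑ s' : S, T s a s' = 1)
    (hpol0 : ∀ s a, 0 ≤ pol s a) (hpol1 : ∀ s, ∑ a : A, pol s a = 1)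
    (Vpi : S → ℝ) (hVpi : ∀ s, Vpi s = rpi pol r s + γ * Ppi T pol Vpi s)
    (dpi : S → ℝ) (hdpi : ∀ s, dpi s = (1 - γ) * μ0 s + γ * Tpi T pol dpi s)
    (hdpi_nonneg : ∀ s, 0 ≤ dpi s)
    (Rpi : ℝ) (hRpi : Rpi = ∑ s : S, rpi pol r s * dpi s) :
    IsLeast {x : ℝ | ∃ V : S → ℝ,
        (∀ s, V s ≥ rpi pol r s + γ * Ppi T pol V s)
        ∧ x = (1 - γ) * ∑ s : S, μ0 s * V s} Rpi
    ∧ (1 - γ) * (∑ s : S, μ0 s * Vpi s) = Rpi := by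
  -- adjoint identity
  have hadj : ∀ V : S → ℝ,
      ∑ s' : S, Tpi T pol dpi s' * V s' = ∑ s : S, dpi s * Ppi T pol V s := by
    intro V
    simp only [Tpi, Ppi, sum_mul, mul_sum]
    rw [Finset.sum_comm]
    refine Finset.sum_congr rfl fun s _ => ?_;
    refine Finset.sum_congr rfl fun s' _ => ?_;
    refine Finset.sum_congr rfl fun a _ => ?_;
    ring
  -- main identity: ∑ dpi (V - γ PpiV) = (1-γ) ∑ μ0 V
  have hkey : ∀ V : S → ℝ,
      ∑ s : S, dpi s * (V s - γ * Ppi T pol V s) = (1 - γ) * ∑ s : S, μ0 s * V s := by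
    intro V
    have h1 : ∑ s : S, dpi s * V s
        = (1 - γ) * ∑ s : S, μ0 s * V s + γ * ∑ s : S, dpi s * Ppi T pol V s := by
      rw [← hadj, mul_sum, mul_sum]
      rw [← Finset.sum_add_distrib]
      refine Finset.sum_congr rfl fun s _ => ?_;
      rw [hdpi s]; ring
    have : ∑ s : S, dpi s * (V s - γ * Ppi T pol V s)
        = ∑ s : S, dpi s * V s - γ * ∑ s : S, dpi s * Ppi T pol V s := by
      rw [mul_sum, ← Finset.sum_sub_distrib]
      refine Finset.sum_congr rfl fun s _ => ?_; ring
    rw [this, h1]; ring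
  have hVeq : (1 - γ) * (∑ s : S, μ0 s * Vpi s) = Rpi := by
    rw [← hkey Vpi, hRpi]
    refine Finset.sum_congr rfl fun s _ => ?_;
    rw [hVpi s]; ring
  refine ⟨⟨⟨Vpi, fun s => le_of_eq (hVpi s).symm, hVeq.symm⟩, ?_⟩, hVeq⟩
  rintro x ⟨V, hfeas, rfl⟩
  rw [hRpi, ← hkey V]
  apply Finset.sum_le_sum
  intro s _
  calc rpi pol r s * dpi s = dpi s * rpi pol r s := by ring
    _ ≤ dpi s * (V s - γ * Ppi T pol V s) := by
        apply mul_le_mul_of_nonneg_left _ (hdpi_nonneg s)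
        have := hfeas s; linarith
end

section
/- (Variance decomposition of the doubly robust residual term, appendix to Theorem 2.) Let p(s,a,s') = d_{π₀}(s) π₀(a|s) T(s'|s,a) be the joint distribution of a transition sampled from the behavior policy, and for F : S × A × S → ℝ write E[F] = ∑_{s,a,s'} p(s,a,s') F(s,a,s') and Var[F] = E[F²] − (E[F])². Define β(s,a) = π(a|s)/π₀(a|s), the residual function G(s,a,s') = ŵ(s) (β(s,a)(r(s,a) + γ V̂(s')) − V̂(s)), the Bellman residual ε(s) = V̂(s) − r^π(s) − γ (P^π V̂)(s), δ₁(s,a) = β(s,a) r(s,a) − r^π(s), and δ₂(s,a,s') = β(s,a) V̂(s') − (P^π V̂)(s). Then Var[G] = Var[(s,a,s') ↦ ŵ(s) ε(s)] + E[(s,a,s') ↦ ŵ(s)² (δ₁(s,a) + γ δ₂(s,a,s'))²]. -/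
open Finset

variable {S A : Type*} [Fintype S] [Fintype A]

/-- Expectation of `F(s,a,s')` under the joint distribution `p(s,a,s')`. -/
noncomputable def Ex3 (p : S → A → S → ℝ) (F : S → A → S → ℝ) : ℝ :=
  ∑ s : S, ∑ a : A, ∑ s' : S, p s a s' * F s a s'

/-- Variance of `F(s,a,s')` under the joint distribution `p(s,a,s')`. -/
noncomputable def Var3 (p : S → A → S → ℝ) (F : S → A → S → ℝ) : ℝ :=
  Ex3 p (fun s a s' => F s a s' ^ 2) - (Ex3 p F) ^ 2

/-- variance decomposition of the doubly robust residual term. -/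
theorem dr_residual_variance_decomposition
    (T : S → A → S → ℝ) (pol pol0 : S → A → ℝ) (r : S → A → ℝ)
    (γ : ℝ) (hγ0 : 0 < γ) (hγ1 : γ < 1)
    (hT0 : ∀ s a s', 0 ≤ T s a s') (hT1 : ∀ s a, ∑ s' : S, T s a s' = 1)
    (hpol0 : ∀ s a, 0 ≤ pol s a) (hpol1 : ∀ s, ∑ a : A, pol s a = 1)
    (hpol0' : ∀ s a, 0 < pol0 s a) (hpol1' : ∀ s, ∑ a : A, pol0 s a = 1)
    (dpi0 : S → ℝ) (hdpi0 : ∀ s, 0 ≤ dpi0 s) (hdpi0' : ∑ s : S, dpi0 s = 1)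
    (V w : S → ℝ) :
    Var3 (fun s a s' => dpi0 s * pol0 s a * T s a s')
        (fun s a s' =>
          w s * (pol s a / pol0 s a * (r s a + γ * V s') - V s))
      = Var3 (fun s a s' => dpi0 s * pol0 s a * T s a s')
          (fun s _a _s' => w s * (V s - rpi pol r s - γ * Ppi T pol V s))
        + Ex3 (fun s a s' => dpi0 s * pol0 s a * T s a s')
            (fun s a s' =>
              w s ^ 2
                * ((pol s a / pol0 s a * r s a - rpi pol r s)
                    + γ * (pol s a / pol0 s a * V s' - Ppi T pol V s)) ^ 2) := by
  set p : S → A → S → ℝ := fun s a s' => dpi0 s * pol0 s a * T s a s' with hp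
  set D : S → A → S → ℝ := fun s a s' =>
    (pol s a / pol0 s a * r s a - rpi pol r s)
      + γ * (pol s a / pol0 s a * V s' - Ppi T pol V s) with hD
  set ε : S → ℝ := fun s => V s - rpi pol r s - γ * Ppi T pol V s with hε
  -- linearity of Ex3
  have hlin : ∀ F1 F2 : S → A → S → ℝ,
      Ex3 p (fun s a s' => F1 s a s' + F2 s a s') = Ex3 p F1 + Ex3 p F2 := by
    intro F1 F2
    simp [Ex3, mul_add, Finset.sum_add_distrib]
  -- the key conditional-mean-zero identity
  have hkey : ∀ s : S, ∑ a : A, ∑ s' : S, pol0 s a * T s a s' * D s a s' = 0 := by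
    intro s
    have hstep : ∀ a : A, ∀ s' : S, pol0 s a * T s a s' * D s a s'
        = (T s a s' * (pol s a * r s a) - T s a s' * (pol0 s a * rpi pol r s))
          + (γ * (T s a s' * pol s a * V s')
              - γ * (T s a s' * (pol0 s a * Ppi T pol V s))) := by
      intro a s'
      have hβ : pol s a / pol0 s a * pol0 s a = pol s a :=
        div_mul_cancel₀ _ (hpol0' s a).ne'
      simp only [hD]
      linear_combination T s a s' * (r s a + γ * V s') * hβ
    have h1 : ∑ a : A, ∑ s' : S, T s a s' * (pol s a * r s a) = rpi pol r s := by
      rw [rpi]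
      refine Finset.sum_congr rfl fun a _ => ?_
      rw [← Finset.sum_mul, hT1, one_mul]
    have h2 : ∑ a : A, ∑ s' : S, T s a s' * (pol0 s a * rpi pol r s) = rpi pol r s := by
      have : ∀ a : A, ∑ s' : S, T s a s' * (pol0 s a * rpi pol r s)
          = pol0 s a * rpi pol r s := fun a => by rw [← Finset.sum_mul, hT1, one_mul]
      rw [Finset.sum_congr rfl fun a _ => this a, ← Finset.sum_mul, hpol1', one_mul]
    have h3 : ∑ a : A, ∑ s' : S, T s a s' * pol s a * V s' = Ppi T pol V s := by
      rw [Ppi, Finset.sum_comm]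
    have h4 : ∑ a : A, ∑ s' : S, T s a s' * (pol0 s a * Ppi T pol V s)
        = Ppi T pol V s := by
      have : ∀ a : A, ∑ s' : S, T s a s' * (pol0 s a * Ppi T pol V s)
          = pol0 s a * Ppi T pol V s := fun a => by rw [← Finset.sum_mul, hT1, one_mul]
      rw [Finset.sum_congr rfl fun a _ => this a, ← Finset.sum_mul, hpol1', one_mul]
    calc ∑ a : A, ∑ s' : S, pol0 s a * T s a s' * D s a s'
        = ∑ a : A, ∑ s' : S,
            ((T s a s' * (pol s a * r s a) - T s a s' * (pol0 s a * rpi pol r s))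
              + (γ * (T s a s' * pol s a * V s')
                  - γ * (T s a s' * (pol0 s a * Ppi T pol V s)))) := by
          exact Finset.sum_congr rfl fun a _ => Finset.sum_congr rfl fun s' _ => hstep a s'
      _ = 0 := by
          simp only [Finset.sum_add_distrib, Finset.sum_sub_distrib, ← Finset.mul_sum,
            h1, h2, h3, h4]
          ring
  -- expectation of c(s) * D(s,a,s') vanishes
  have hzero : ∀ c : S → ℝ, Ex3 p (fun s a s' => c s * D s a s') = 0 := by
    intro c
    rw [Ex3]
    refine Finset.sum_eq_zero fun s _ => ?_
    have : ∑ a : A, ∑ s' : S, p s a s' * (c s * D s a s')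
        = dpi0 s * c s * ∑ a : A, ∑ s' : S, pol0 s a * T s a s' * D s a s' := by
      rw [Finset.mul_sum]
      refine Finset.sum_congr rfl fun a _ => ?_
      rw [Finset.mul_sum]
      refine Finset.sum_congr rfl fun s' _ => ?_
      simp only [hp]; ring
    rw [this, hkey s, mul_zero]
  -- decompose G
  have hGeq : (fun s a s' => w s * (pol s a / pol0 s a * (r s a + γ * V s') - V s))
      = fun s a s' => w s * D s a s' + -(w s * ε s) := by
    funext s a s'
    simp only [hD, hε]; ring
  have hG2eq : (fun s a s' =>
        (w s * (pol s a / pol0 s a * (r s a + γ * V s') - V s)) ^ 2)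
      = fun s a s' => w s ^ 2 * D s a s' ^ 2
          + ((w s * ε s) ^ 2 + (-2 * w s ^ 2 * ε s) * D s a s') := by
    funext s a s'
    simp only [hD, hε]; ring
  have hEG : Ex3 p (fun s a s' => w s * (pol s a / pol0 s a * (r s a + γ * V s') - V s))
      = Ex3 p (fun s _ _ => -(w s * ε s)) := by
    rw [hGeq, hlin, hzero, zero_add]
  have hEnegwε : Ex3 p (fun s _ _ => -(w s * ε s)) = - Ex3 p (fun s _ _ => w s * ε s) := by
    simp [Ex3, Finset.sum_neg_distrib]
  have hEG2 : Ex3 p (fun s a s' =>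
        (w s * (pol s a / pol0 s a * (r s a + γ * V s') - V s)) ^ 2)
      = Ex3 p (fun s a s' => w s ^ 2 * D s a s' ^ 2)
        + Ex3 p (fun s _ _ => (w s * ε s) ^ 2) := by
    rw [hG2eq, hlin, hlin, hzero (fun s => -2 * w s ^ 2 * ε s), add_zero]
  rw [Var3, Var3, hEG2, hEG, hEnegwε]
  have e1 : (fun (s : S) (_ : A) (_ : S) =>
      (w s * (V s - rpi pol r s - γ * Ppi T pol V s)) ^ 2)
      = fun (s : S) (_ : A) (_ : S) => (w s * ε s) ^ 2 := rfl
  have e2 : (fun (s : S) (_ : A) (_ : S) =>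
      w s * (V s - rpi pol r s - γ * Ppi T pol V s))
      = fun (s : S) (_ : A) (_ : S) => w s * ε s := rfl
  have e3 : (fun (s : S) (a : A) (s' : S) =>
      w s ^ 2 * (pol s a / pol0 s a * r s a - rpi pol r s
        + γ * (pol s a / pol0 s a * V s' - Ppi T pol V s)) ^ 2)
      = fun (s : S) (a : A) (s' : S) => w s ^ 2 * D s a s' ^ 2 := rfl
  rw [e1, e2, e3]
  ring
end

section
/- (Variance decomposition of the state-visitation importance-sampling estimator.) Let p(s,a) = d_{π₀}(s) π₀(a|s) be the joint distribution of a state–action pair sampled from the behavior policy, and for F : S × A → ℝ write E[F] = ∑_{s,a} p(s,a) F(s,a) and Var[F] = E[F²] − (E[F])². Define β(s,a) = π(a|s)/π₀(a|s) and δ₁(s,a) = β(s,a) r(s,a) − r^π(s). Then Var[(s,a) ↦ ŵ(s) β(s,a) r(s,a)] = Var[(s,a) ↦ ŵ(s) r^π(s)] + E[(s,a) ↦ ŵ(s)² δ₁(s,a)²]. -/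
open Finset

variable {S A : Type*} [Fintype S] [Fintype A]

/-- Expectation of `F(s,a)` under the joint distribution `p(s,a)`. -/
noncomputable def Ex2 (p : S → A → ℝ) (F : S → A → ℝ) : ℝ :=
  ∑ s : S, ∑ a : A, p s a * F s a

/-- Variance of `F(s,a)` under the joint distribution `p(s,a)`. -/
noncomputable def Var2 (p : S → A → ℝ) (F : S → A → ℝ) : ℝ :=
  Ex2 p (fun s a => F s a ^ 2) - (Ex2 p F) ^ 2

private lemma sum_second_moment {A : Type*} [Fintype A]
    (q f : A → ℝ) (w m c : ℝ) (hq : ∑ a : A, q a = 1)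
    (hf : ∑ a : A, q a * f a = m) :
    ∑ a : A, c * q a * (w * f a) ^ 2
      = (∑ a : A, c * q a * (w * m) ^ 2)
        + ∑ a : A, c * q a * (w ^ 2 * (f a - m) ^ 2) := by
  have expand : ∑ a : A, c * q a * (w * f a) ^ 2
      - (∑ a : A, c * q a * (w * m) ^ 2)
      - ∑ a : A, c * q a * (w ^ 2 * (f a - m) ^ 2)
      = 2 * c * w ^ 2 * m * (∑ a : A, q a * f a)
        - 2 * c * w ^ 2 * m ^ 2 * (∑ a : A, q a) := by
    simp only [Finset.mul_sum]
    rw [← Finset.sum_sub_distrib, ← Finset.sum_sub_distrib, ← Finset.sum_sub_distrib]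
    exact Finset.sum_congr rfl fun a _ => by ring
  rw [hf, hq] at expand
  linarith

/-- variance decomposition of the state-visitation
importance-sampling estimator. -/
theorem sis_variance_decomposition
    (pol pol0 : S → A → ℝ) (r : S → A → ℝ)
    (hpol0 : ∀ s a, 0 ≤ pol s a) (hpol1 : ∀ s, ∑ a : A, pol s a = 1)
    (hpol0' : ∀ s a, 0 < pol0 s a) (hpol1' : ∀ s, ∑ a : A, pol0 s a = 1)
    (dpi0 : S → ℝ) (hdpi0 : ∀ s, 0 ≤ dpi0 s) (hdpi0' : ∑ s : S, dpi0 s = 1)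
    (w : S → ℝ) :
    Var2 (fun s a => dpi0 s * pol0 s a)
        (fun s a => w s * (pol s a / pol0 s a) * r s a)
      = Var2 (fun s a => dpi0 s * pol0 s a)
          (fun s _a => w s * rpi pol r s)
        + Ex2 (fun s a => dpi0 s * pol0 s a)
            (fun s a => w s ^ 2 * (pol s a / pol0 s a * r s a - rpi pol r s) ^ 2) := by
  have key : ∀ s a, pol0 s a * (pol s a / pol0 s a) = pol s a := by
    intro s a; rw [mul_comm]; exact div_mul_cancel₀ _ (hpol0' s a).ne'
  have hE : ∀ s, ∑ a : A, pol0 s a * (pol s a / pol0 s a * r s a) = rpi pol r s := by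
    intro s; unfold rpi
    refine Finset.sum_congr rfl fun a _ => ?_
    rw [← mul_assoc, key]
  have hmean :
      Ex2 (fun s a => dpi0 s * pol0 s a)
          (fun s a => w s * (pol s a / pol0 s a) * r s a)
        = Ex2 (fun s a => dpi0 s * pol0 s a) (fun s _a => w s * rpi pol r s) := by
    unfold Ex2
    refine Finset.sum_congr rfl fun s _ => ?_
    have l1 : ∑ a : A, dpi0 s * pol0 s a * (w s * (pol s a / pol0 s a) * r s a)
        = dpi0 s * w s * ∑ a : A, pol0 s a * (pol s a / pol0 s a * r s a) := by
      rw [Finset.mul_sum]; exact Finset.sum_congr rfl fun a _ => by ring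
    have l2 : ∑ a : A, dpi0 s * pol0 s a * (w s * rpi pol r s)
        = dpi0 s * w s * rpi pol r s * ∑ a : A, pol0 s a := by
      rw [Finset.mul_sum]; exact Finset.sum_congr rfl fun a _ => by ring
    rw [l1, hE, l2, hpol1' s]; ring
  have hsec :
      Ex2 (fun s a => dpi0 s * pol0 s a)
          (fun s a => (w s * (pol s a / pol0 s a) * r s a) ^ 2)
        = Ex2 (fun s a => dpi0 s * pol0 s a)
            (fun s _a => (w s * rpi pol r s) ^ 2)
          + Ex2 (fun s a => dpi0 s * pol0 s a)
              (fun s a => w s ^ 2 * (pol s a / pol0 s a * r s a - rpi pol r s) ^ 2) := by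
    unfold Ex2
    rw [← Finset.sum_add_distrib]
    refine Finset.sum_congr rfl fun s _ => ?_
    have := sum_second_moment (fun a => pol0 s a)
        (fun a => pol s a / pol0 s a * r s a) (w s) (rpi pol r s) (dpi0 s)
        (hpol1' s) (hE s)
    simpa [mul_assoc] using this
  unfold Var2
  rw [hmean, hsec]
  ring
end

section
/- (Double robustness of the average-reward estimator, appendix theorem.) Suppose d_π : S → ℝ satisfies the stationarity equation d_π = T^π d_π and ∑_s d_π(s) = 1, let R^π = ∑_s d_π(s) r^π(s), and suppose d_{π₀}(s) > 0 for all s. Let V̂, ŵ : S → ℝ with Z := ∑_s d_{π₀}(s) ŵ(s) ≠ 0, and define the self-normalized population doubly robust estimator R_DR^∞[V̂, ŵ] = (∑_s d_{π₀}(s) ŵ(s) (r^π(s) − V̂(s) + (P^π V̂)(s))) / Z. Then R_DR^∞[V̂, ŵ] − R^π = ∑_s d_{π₀}(s) · ε_ŵ(s) · ε_V̂(s), where ε_ŵ(s) = ŵ(s)/Z − d_π(s)/d_{π₀}(s) and ε_V̂(s) = r^π(s) − V̂(s) + (P^π V̂)(s) − R^π. In particular, R_DR^∞[V̂, ŵ]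 = R^π whenever either ŵ(s)/Z = d_π(s)/d_{π₀}(s) for all s or ε_V̂ ≡ 0. -/
open Finset

variable {S A : Type*} [Fintype S] [Fintype A]

/-- double robustness of the self-normalized average-reward
doubly robust estimator. -/
theorem average_reward_doubly_robust
    (T : S → A → S → ℝ) (pol : S → A → ℝ) (r : S → A → ℝ)
    (hT0 : ∀ s a s', 0 ≤ T s a s') (hT1 : ∀ s a, ∑ s' : S, T s a s' = 1)
    (hpol0 : ∀ s a, 0 ≤ pol s a) (hpol1 : ∀ s, ∑ a : A, pol s a = 1)
    (dpi : S → ℝ) (hstat : ∀ s, dpi s = Tpi T pol dpi s)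
    (hdpi1 : ∑ s : S, dpi s = 1)
    (Rpi : ℝ) (hRpi : Rpi = ∑ s : S, dpi s * rpi pol r s)
    (dpi0 : S → ℝ) (hdpi0 : ∀ s, 0 < dpi0 s)
    (V w : S → ℝ) (Z : ℝ) (hZ : Z = ∑ s : S, dpi0 s * w s) (hZ0 : Z ≠ 0) :
    (∑ s : S, dpi0 s * w s * (rpi pol r s - V s + Ppi T pol V s)) / Z - Rpi
      = ∑ s : S, dpi0 s * (w s / Z - dpi s / dpi0 s)
          * (rpi pol r s - V s + Ppi T pol V s - Rpi)
    ∧ ((∀ s, w s / Z = dpi s / dpi0 s) →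
        (∑ s : S, dpi0 s * w s * (rpi pol r s - V s + Ppi T pol V s)) / Z = Rpi)
    ∧ ((∀ s, rpi pol r s - V s + Ppi T pol V s - Rpi = 0) →
        (∑ s : S, dpi0 s * w s * (rpi pol r s - V s + Ppi T pol V s)) / Z = Rpi) := by

  have hswap : ∑ s : S, dpi s * Ppi T pol V s = ∑ s' : S, dpi s' * V s' := by
    simp only [Ppi, Finset.mul_sum]
    rw [Finset.sum_comm]
    refine Finset.sum_congr rfl fun s' _ => ?_
    rw [hstat s']
    simp only [Tpi, Finset.sum_mul]
    refine Finset.sum_congr rfl fun s _ => Finset.sum_congr rfl fun a _ => ?_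
    ring
  have key : ∑ s : S, dpi s * (rpi pol r s - V s + Ppi T pol V s - Rpi) = 0 := by
    have : ∑ s : S, dpi s * (rpi pol r s - V s + Ppi T pol V s - Rpi)
        = (∑ s : S, dpi s * rpi pol r s) - (∑ s : S, dpi s * V s)
          + (∑ s : S, dpi s * Ppi T pol V s) - (∑ s : S, dpi s) * Rpi := by
      rw [Finset.sum_mul]
      rw [← Finset.sum_sub_distrib, ← Finset.sum_add_distrib, ← Finset.sum_sub_distrib]
      refine Finset.sum_congr rfl fun s _ => ?_
      ring
    rw [this, hswap, hdpi1, ← hRpi]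
    ring
  have hmain : (∑ s : S, dpi0 s * w s * (rpi pol r s - V s + Ppi T pol V s)) / Z - Rpi
      = ∑ s : S, dpi0 s * (w s / Z - dpi s / dpi0 s)
          * (rpi pol r s - V s + Ppi T pol V s - Rpi) := by
    have expand : ∑ s : S, dpi0 s * (w s / Z - dpi s / dpi0 s)
          * (rpi pol r s - V s + Ppi T pol V s - Rpi)
        = (∑ s : S, dpi0 s * w s * (rpi pol r s - V s + Ppi T pol V s)) / Z
          - (∑ s : S, dpi0 s * w s) / Z * Rpi
          - ∑ s : S, dpi s * (rpi pol r s - V s + Ppi T pol V s - Rpi) := by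
      rw [Finset.sum_div, Finset.sum_div, Finset.sum_mul, ← Finset.sum_sub_distrib,
        ← Finset.sum_sub_distrib]
      refine Finset.sum_congr rfl fun s _ => ?_
      have h0 : dpi0 s ≠ 0 := (hdpi0 s).ne'
      field_simp
    rw [expand, key, ← hZ, div_self hZ0]
    ring
  refine ⟨hmain, fun h => ?_, fun h => ?_⟩
  · have : (∑ s : S, dpi0 s * w s * (rpi pol r s - V s + Ppi T pol V s)) / Z - Rpi = 0 := by
      rw [hmain]
      apply Finset.sum_eq_zero
      intro s _
      rw [h s]
      ring
    linarith
  · have : (∑ s : S, dpi0 s * w s * (rpi pol r s - V s + Ppi T pol V s)) / Z - Rpi = 0 := by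
      rw [hmain]
      apply Finset.sum_eq_zero
      intro s _
      rw [h s]
      ring
    linarith
end
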